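/- arXiv:2006.12466 — 2 statements merged into one kernel-verified Lean document; each statement's English description precedes it below -/
import Mathlib

section
/- Let N1 = N(mu1, sigma^2 I) and N2 = N(mu2, sigma^2 I) be Gaussian measures on R^d and g : R^d → R a nonnegative measurable function with finite second moment under N1. Then E_{z~N1}[g(z)] - E_{z~N2}[g(z)] ≤ min{ ||mu1 - mu2|| / sigma , 1 } · sqrt( E_{z~N1}[g(z)^2] ). -/
open MeasureTheory

/-- The density of `N(μ, σ² I)` on `ℝ^d`. -/
noncomputable def gaussPdf (d : ℕ) (μ : EuclideanSpace ℝ (Fin d)) (σ : ℝ)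
    (z : EuclideanSpace ℝ (Fin d)) : ℝ :=
  (2 * Real.pi * σ ^ 2) ^ (-(d : ℝ) / 2) * Real.exp (-‖z - μ‖ ^ 2 / (2 * σ ^ 2))

/-- The Gaussian measure `N(μ, σ² I)` on `ℝ^d`. -/
noncomputable def gaussMeasure (d : ℕ) (μ : EuclideanSpace ℝ (Fin d)) (σ : ℝ) :
    Measure (EuclideanSpace ℝ (Fin d)) :=
  volume.withDensity (fun z => ENNReal.ofReal (gaussPdf d μ σ z))

/-! With `p₁, p₂` the two densities, `g p₁ - g p₂ ≤ 2 (g √p₁) |√p₁ - √p₂|` pointwise, so by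
Cauchy–Schwarz `E₁ g - E₂ g ≤ 2 √(E₁ g²) · (∫ (√p₁ - √p₂)²)^(1/2)`, and the last integral is
`2 - 2 ∫ √(p₁ p₂)`. For Gaussians with common covariance, completing the square (Apollonius'
identity) gives `√(p₁ p₂) = exp (-‖μ₁ - μ₂‖² / (8σ²)) · p_m` with `m` the midpoint of the means, so
`1 - e⁻ᵗ ≤ t` bounds the Hellinger factor by `‖μ₁ - μ₂‖ / σ`. The bound `1` is simply
`E₁ g - E₂ g ≤ E₁ g ≤ √(E₁ g²)` for `g ≥ 0`. -/

section

variable {α : Type*} [MeasurableSpace α] {μ : Measure α}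

lemma integral_mul_le_sqrt_integral_sq_mul_sqrt_integral_sq {f g : α → ℝ}
    (hf0 : 0 ≤ f) (hg0 : 0 ≤ g) (hf : MemLp f 2 μ) (hg : MemLp g 2 μ) :
    ∫ x, f x * g x ∂μ ≤ √(∫ x, f x ^ 2 ∂μ) * √(∫ x, g x ^ 2 ∂μ) := by
  have h := integral_mul_le_Lp_mul_Lq_of_nonneg (p := 2) (q := 2) (μ := μ)
    ⟨by norm_num, by norm_num, by norm_num⟩ (.of_forall hf0) (.of_forall hg0)
    (by rwa [ENNReal.ofReal_ofNat]) (by rwa [ENNReal.ofReal_ofNat])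
  simpa only [Real.rpow_two, ← Real.sqrt_eq_rpow] using h

lemma integral_le_sqrt_integral_sq [IsProbabilityMeasure μ] {f : α → ℝ} (hf : MemLp f 2 μ) :
    ∫ x, f x ∂μ ≤ √(∫ x, f x ^ 2 ∂μ) := by
  refine Real.le_sqrt_of_sq_le ?_
  have h := ProbabilityTheory.variance_nonneg f μ
  rw [ProbabilityTheory.variance_eq_sub hf] at h
  simpa [sub_nonneg] using h

lemma memLp_two_sqrt {p : α → ℝ} (hp0 : 0 ≤ p) (hp : Integrable p μ) :
    MemLp (fun x => √(p x)) 2 μ := by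
  refine (memLp_two_iff_integrable_sq (Real.continuous_sqrt.comp_aestronglyMeasurable hp.1)).2 ?_
  simpa only [Real.sq_sqrt (hp0 _)] using hp

lemma memLp_two_mul_sqrt {g p : α → ℝ} (hp0 : 0 ≤ p) (hg : AEStronglyMeasurable g μ)
    (hp : AEStronglyMeasurable p μ) (hgp : Integrable (fun x => g x ^ 2 * p x) μ) :
    MemLp (fun x => g x * √(p x)) 2 μ := by
  refine (memLp_two_iff_integrable_sq
    (hg.mul (Real.continuous_sqrt.comp_aestronglyMeasurable hp))).2 ?_
  simpa only [Pi.mul_apply, mul_pow, Real.sq_sqrt (hp0 _)] using hgp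

lemma integral_sqrt_sub_sqrt_sq {p q : α → ℝ} (hp0 : 0 ≤ p) (hq0 : 0 ≤ q)
    (hp : Integrable p μ) (hq : Integrable q μ) :
    ∫ x, (√(p x) - √(q x)) ^ 2 ∂μ =
      ∫ x, p x ∂μ + ∫ x, q x ∂μ - 2 * ∫ x, √(p x) * √(q x) ∂μ := by
  have hpq : Integrable (fun x => √(p x) * √(q x)) μ :=
    (memLp_two_sqrt hp0 hp).integrable_mul (memLp_two_sqrt hq0 hq)
  have hexp : ∀ x, (√(p x) - √(q x)) ^ 2 = p x + q x - 2 * (√(p x) * √(q x)) := fun x => by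
    rw [sub_sq, Real.sq_sqrt (hp0 x), Real.sq_sqrt (hq0 x)]
    ring
  have hpq' : Integrable (fun x => p x + q x) μ := hp.add hq
  simp_rw [hexp]
  rw [integral_sub hpq' (hpq.const_mul 2), integral_add hp hq, integral_const_mul]

lemma mul_sq_sub_mul_sq_le {g a b : ℝ} (hg : 0 ≤ g) (ha : 0 ≤ a) (hb : 0 ≤ b) :
    g * a ^ 2 - g * b ^ 2 ≤ 2 * (g * a * |a - b|) := by
  rcases le_total b a with hba | hab
  · rw [abs_of_nonneg (sub_nonneg.2 hba)]
    nlinarith [mul_nonneg (mul_nonneg hg (sub_nonneg.2 hba)) (sub_nonneg.2 hba)]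
  · nlinarith [mul_nonneg (mul_nonneg hg ha) (abs_nonneg (a - b)),
      mul_nonneg hg (mul_nonneg (sub_nonneg.2 hab) (add_nonneg ha hb))]

lemma integral_mul_sub_integral_mul_le {g p q : α → ℝ}
    (hg0 : 0 ≤ g) (hp0 : 0 ≤ p) (hq0 : 0 ≤ q)
    (hg : AEStronglyMeasurable g μ) (hp : Integrable p μ) (hq : Integrable q μ)
    (hgp : Integrable (fun x => g x ^ 2 * p x) μ) (hgq : Integrable (fun x => g x * q x) μ) :
    ∫ x, g x * p x ∂μ - ∫ x, g x * q x ∂μ ≤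
      2 * √(∫ x, g x ^ 2 * p x ∂μ) * √(∫ x, (√(p x) - √(q x)) ^ 2 ∂μ) := by
  have hsp := memLp_two_sqrt hp0 hp
  have hsq := memLp_two_sqrt hq0 hq
  have hgsp := memLp_two_mul_sqrt hp0 hg hp.1 hgp
  have hdiff : MemLp (fun x => |√(p x) - √(q x)|) 2 μ := (hsp.sub hsq).abs
  have hgp' : Integrable (fun x => g x * p x) μ := by
    refine (hgsp.integrable_mul hsp).congr (.of_forall fun x => ?_)
    simp only [Pi.mul_apply, mul_assoc, Real.mul_self_sqrt (hp0 x)]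
  calc ∫ x, g x * p x ∂μ - ∫ x, g x * q x ∂μ
      = ∫ x, (g x * p x - g x * q x) ∂μ := (integral_sub hgp' hgq).symm
    _ ≤ ∫ x, 2 * (g x * √(p x) * |√(p x) - √(q x)|) ∂μ := by
        refine integral_mono (hgp'.sub hgq) ((hgsp.integrable_mul hdiff).const_mul 2)
          fun x => ?_
        have h := mul_sq_sub_mul_sq_le (hg0 x) (Real.sqrt_nonneg (p x))
          (Real.sqrt_nonneg (q x))
        rwa [Real.sq_sqrt (hp0 x), Real.sq_sqrt (hq0 x)] at h
    _ ≤ 2 * (√(∫ x, (g x * √(p x)) ^ 2 ∂μ) * √(∫ x, |√(p x) - √(q x)| ^ 2 ∂μ)) := by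
        rw [integral_const_mul]
        gcongr
        exact integral_mul_le_sqrt_integral_sq_mul_sqrt_integral_sq
          (fun x => mul_nonneg (hg0 x) (Real.sqrt_nonneg _)) (fun x => abs_nonneg _) hgsp hdiff
    _ = 2 * √(∫ x, g x ^ 2 * p x ∂μ) * √(∫ x, (√(p x) - √(q x)) ^ 2 ∂μ) := by
        simp only [mul_pow, Real.sq_sqrt (hp0 _), sq_abs, mul_assoc]

end

section

variable {d : ℕ} {σ : ℝ}

lemma gaussPdf_nonneg (μ z : EuclideanSpace ℝ (Fin d)) : 0 ≤ gaussPdf d μ σ z := by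
  unfold gaussPdf
  positivity

lemma gaussPdf_pos (hσ : 0 < σ) (μ z : EuclideanSpace ℝ (Fin d)) : 0 < gaussPdf d μ σ z := by
  unfold gaussPdf
  positivity

lemma continuous_gaussPdf (μ : EuclideanSpace ℝ (Fin d)) : Continuous (gaussPdf d μ σ) := by
  unfold gaussPdf
  fun_prop

lemma integral_gaussPdf (hσ : 0 < σ) (μ : EuclideanSpace ℝ (Fin d)) :
    ∫ z, gaussPdf d μ σ z = 1 := by
  have hc : 0 < (2 * σ ^ 2)⁻¹ := by positivity
  have hb : 0 < 2 * Real.pi * σ ^ 2 := by positivity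
  have h := GaussianFourier.integral_rexp_neg_mul_sq_norm (V := EuclideanSpace ℝ (Fin d)) hc
  rw [finrank_euclideanSpace_fin, div_inv_eq_mul, ← mul_assoc, mul_comm Real.pi] at h
  have hpdf : ∀ z, gaussPdf d μ σ z =
      (2 * Real.pi * σ ^ 2) ^ (-(d : ℝ) / 2) * Real.exp (-(2 * σ ^ 2)⁻¹ * ‖z - μ‖ ^ 2) :=
    fun z => by simp only [gaussPdf, neg_mul, div_eq_inv_mul, mul_neg]
  simp only [hpdf, integral_const_mul]
  rw [integral_sub_right_eq_self (fun z => Real.exp (-(2 * σ ^ 2)⁻¹ * ‖z‖ ^ 2)) μ, h,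
    ← Real.rpow_add hb, neg_div, neg_add_cancel, Real.rpow_zero]

lemma integrable_gaussPdf (hσ : 0 < σ) (μ : EuclideanSpace ℝ (Fin d)) :
    Integrable (gaussPdf d μ σ) :=
  .of_integral_ne_zero (by simp [integral_gaussPdf hσ μ])

lemma integral_gaussMeasure (μ : EuclideanSpace ℝ (Fin d)) (f : EuclideanSpace ℝ (Fin d) → ℝ) :
    ∫ z, f z ∂gaussMeasure d μ σ = ∫ z, f z * gaussPdf d μ σ z := by
  rw [gaussMeasure, integral_withDensity_eq_integral_toReal_smul
    (continuous_gaussPdf μ).measurable.ennreal_ofReal (.of_forall fun _ => ENNReal.ofReal_lt_top)]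
  simp only [ENNReal.toReal_ofReal (gaussPdf_nonneg μ _), smul_eq_mul, mul_comm]

lemma integrable_gaussMeasure_iff (μ : EuclideanSpace ℝ (Fin d))
    {f : EuclideanSpace ℝ (Fin d) → ℝ} :
    Integrable f (gaussMeasure d μ σ) ↔ Integrable (fun z => f z * gaussPdf d μ σ z) := by
  rw [gaussMeasure, integrable_withDensity_iff_integrable_smul'
    (continuous_gaussPdf μ).measurable.ennreal_ofReal (.of_forall fun _ => ENNReal.ofReal_lt_top)]
  simp only [ENNReal.toReal_ofReal (gaussPdf_nonneg μ _), smul_eq_mul, mul_comm]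

lemma isProbabilityMeasure_gaussMeasure (hσ : 0 < σ) (μ : EuclideanSpace ℝ (Fin d)) :
    IsProbabilityMeasure (gaussMeasure d μ σ) := by
  constructor
  rw [gaussMeasure, withDensity_apply _ MeasurableSet.univ, Measure.restrict_univ,
    ← ofReal_integral_eq_lintegral_ofReal (integrable_gaussPdf hσ μ)
      (.of_forall (gaussPdf_nonneg μ)), integral_gaussPdf hσ μ, ENNReal.ofReal_one]

lemma gaussPdf_mul_gaussPdf (a b z : EuclideanSpace ℝ (Fin d)) :
    gaussPdf d a σ z * gaussPdf d b σ z =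
      (Real.exp (-‖a - b‖ ^ 2 / (8 * σ ^ 2)) * gaussPdf d (midpoint ℝ a b) σ z) ^ 2 := by
  have h :=
    EuclideanGeometry.dist_sq_add_dist_sq_eq_two_mul_dist_midpoint_sq_add_half_dist_sq z a b
  simp only [dist_eq_norm] at h
  have hexp : -‖z - a‖ ^ 2 / (2 * σ ^ 2) + -‖z - b‖ ^ 2 / (2 * σ ^ 2) =
      (-‖a - b‖ ^ 2 / (8 * σ ^ 2) + -‖z - midpoint ℝ a b‖ ^ 2 / (2 * σ ^ 2)) +
        (-‖a - b‖ ^ 2 / (8 * σ ^ 2) + -‖z - midpoint ℝ a b‖ ^ 2 / (2 * σ ^ 2)) := by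
    linear_combination (-1 / (2 * σ ^ 2)) * h
  simp only [gaussPdf]
  rw [mul_mul_mul_comm, ← Real.exp_add, hexp, Real.exp_add, Real.exp_add]
  ring

lemma sqrt_gaussPdf_mul_sqrt_gaussPdf (a b z : EuclideanSpace ℝ (Fin d)) :
    √(gaussPdf d a σ z) * √(gaussPdf d b σ z) =
      Real.exp (-‖a - b‖ ^ 2 / (8 * σ ^ 2)) * gaussPdf d (midpoint ℝ a b) σ z := by
  rw [← Real.sqrt_mul (gaussPdf_nonneg a z), gaussPdf_mul_gaussPdf,
    Real.sqrt_sq (mul_nonneg (Real.exp_pos _).le (gaussPdf_nonneg _ z))]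

lemma integral_sqrt_gaussPdf_mul_sqrt_gaussPdf (hσ : 0 < σ) (a b : EuclideanSpace ℝ (Fin d)) :
    ∫ z, √(gaussPdf d a σ z) * √(gaussPdf d b σ z) =
      Real.exp (-‖a - b‖ ^ 2 / (8 * σ ^ 2)) := by
  simp only [sqrt_gaussPdf_mul_sqrt_gaussPdf, integral_const_mul, integral_gaussPdf hσ, mul_one]

lemma memLp_two_gaussPdf_div_sqrt_gaussPdf (hσ : 0 < σ) (a b : EuclideanSpace ℝ (Fin d)) :
    MemLp (fun z => gaussPdf d b σ z / √(gaussPdf d a σ z)) 2 := by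
  set c := Equiv.pointReflection b a
  have hsq : ∀ z, (gaussPdf d b σ z / √(gaussPdf d a σ z)) ^ 2 =
      gaussPdf d c σ z / Real.exp (-‖a - c‖ ^ 2 / (8 * σ ^ 2)) ^ 2 := fun z => by
    have h := gaussPdf_mul_gaussPdf (σ := σ) a c z
    rw [midpoint_pointReflection_right] at h
    rw [div_pow, Real.sq_sqrt (gaussPdf_nonneg a z),
      div_eq_div_iff (gaussPdf_pos hσ a z).ne' (by positivity)]
    linear_combination -h
  have hcont : Continuous fun z => gaussPdf d b σ z / √(gaussPdf d a σ z) :=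
    (continuous_gaussPdf b).div (continuous_gaussPdf a).sqrt
      fun z => (Real.sqrt_pos.2 (gaussPdf_pos hσ a z)).ne'
  refine (memLp_two_iff_integrable_sq hcont.aestronglyMeasurable).2 ?_
  simpa only [Pi.div_apply, hsq] using (integrable_gaussPdf hσ c).div_const _

lemma two_mul_sqrt_two_sub_two_mul_exp_le {x : ℝ} (hx : 0 ≤ x) :
    2 * √(2 - 2 * Real.exp (-x ^ 2 / 8)) ≤ x := by
  have h := Real.add_one_le_exp (-x ^ 2 / 8)
  have : √(2 - 2 * Real.exp (-x ^ 2 / 8)) ≤ x / 2 :=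
    (Real.sqrt_le_left (by positivity)).2 (by linarith)
  linarith

lemma integral_gaussMeasure_sub_integral_gaussMeasure_le (hσ : 0 < σ)
    (a b : EuclideanSpace ℝ (Fin d))
    {g : EuclideanSpace ℝ (Fin d) → ℝ} (hg : Measurable g) (hg0 : 0 ≤ g)
    (hg2 : Integrable (fun z => g z ^ 2) (gaussMeasure d a σ)) :
    ∫ z, g z ∂gaussMeasure d a σ - ∫ z, g z ∂gaussMeasure d b σ ≤
      ‖a - b‖ / σ * √(∫ z, g z ^ 2 ∂gaussMeasure d a σ) := by
  rw [integral_gaussMeasure, integral_gaussMeasure, integral_gaussMeasure]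
  have hgp := (integrable_gaussMeasure_iff a).1 hg2
  -- `g p_b = (g √p_a) (p_b / √p_a)`, and `(p_b / √p_a)²` is a multiple of a Gaussian density
  have hgq : Integrable (fun z => g z * gaussPdf d b σ z) := by
    refine ((memLp_two_mul_sqrt (gaussPdf_nonneg a) hg.aestronglyMeasurable
      (continuous_gaussPdf a).aestronglyMeasurable hgp).integrable_mul
      (memLp_two_gaussPdf_div_sqrt_gaussPdf hσ a b)).congr (.of_forall fun z => ?_)
    have := (Real.sqrt_pos.2 (gaussPdf_pos hσ a z)).ne'
    simp only [Pi.mul_apply]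
    field_simp
  calc _ ≤ 2 * √(∫ z, g z ^ 2 * gaussPdf d a σ z) *
        √(∫ z, (√(gaussPdf d a σ z) - √(gaussPdf d b σ z)) ^ 2) :=
        integral_mul_sub_integral_mul_le hg0 (gaussPdf_nonneg a) (gaussPdf_nonneg b)
          hg.aestronglyMeasurable (integrable_gaussPdf hσ a) (integrable_gaussPdf hσ b) hgp hgq
    _ = 2 * √(2 - 2 * Real.exp (-(‖a - b‖ / σ) ^ 2 / 8)) *
          √(∫ z, g z ^ 2 * gaussPdf d a σ z) := by
        rw [integral_sqrt_sub_sqrt_sq (gaussPdf_nonneg a) (gaussPdf_nonneg b)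
          (integrable_gaussPdf hσ a) (integrable_gaussPdf hσ b), integral_gaussPdf hσ,
          integral_gaussPdf hσ, integral_sqrt_gaussPdf_mul_sqrt_gaussPdf hσ, div_pow]
        ring_nf
    _ ≤ ‖a - b‖ / σ * √(∫ z, g z ^ 2 * gaussPdf d a σ z) := by
        gcongr
        exact two_mul_sqrt_two_sub_two_mul_exp_le (by positivity)

end

theorem stmt_1 (d : ℕ) (mu1 mu2 : EuclideanSpace ℝ (Fin d)) (σ : ℝ) (hσ : 0 < σ)
    (g : EuclideanSpace ℝ (Fin d) → ℝ) (hg : Measurable g) (hg0 : ∀ z, 0 ≤ g z)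
    (hg2 : Integrable (fun z => g z ^ 2) (gaussMeasure d mu1 σ)) :
    (∫ z, g z ∂(gaussMeasure d mu1 σ)) - ∫ z, g z ∂(gaussMeasure d mu2 σ) ≤
      min (‖mu1 - mu2‖ / σ) 1 * Real.sqrt (∫ z, g z ^ 2 ∂(gaussMeasure d mu1 σ)) := by
  have := isProbabilityMeasure_gaussMeasure hσ mu1
  have hE1 : ∫ z, g z ∂gaussMeasure d mu1 σ ≤ √(∫ z, g z ^ 2 ∂gaussMeasure d mu1 σ) :=
    integral_le_sqrt_integral_sq ((memLp_two_iff_integrable_sq hg.aestronglyMeasurable).2 hg2)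
  have hE2 : 0 ≤ ∫ z, g z ∂gaussMeasure d mu2 σ := integral_nonneg hg0
  rw [min_mul_of_nonneg _ _ (Real.sqrt_nonneg _), one_mul]
  exact le_min (integral_gaussMeasure_sub_integral_gaussMeasure_le hσ mu1 mu2 hg hg0 hg2)
    (by linarith)
end

section
/- Fix λ > 0, a positive integer H, and for t = 0, ..., T-1 and h = 0, ..., H-1 vectors φ_h^t in R^d. Define Σ^0 = λ I and Σ^{t+1} = Σ^t + Σ_{h=0}^{H-1} φ_h^t (φ_h^t)^T. Then Σ_{t=0}^{T-1} min{ Σ_{h=0}^{H-1} (φ_h^t)^T (Σ^t)^{-1} φ_h^t , 1 } ≤ 2 log( det(Σ^T) / det(Σ^0) ). -/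
/-!
Write `M_t = ∑_h φ_h^t (φ_h^t)ᵀ`, so that `Σ^{t+1} = Σ^t + M_t` and the `t`-th summand is
`min (x_t, 1)` with `x_t = tr((Σ^t)⁻¹ M_t)`. Conjugating by `(Σ^t)^{1/2}` gives
`det Σ^{t+1} = det Σ^t · det(1 + N_t)` with `N_t` positive semidefinite of trace `x_t`, and
`det(1 + N_t) = ∏ (1 + μ_i) ≥ 1 + x_t` over the eigenvalues `μ_i ≥ 0` of `N_t`. Hence
`log det Σ^{t+1} - log det Σ^t ≥ log (1 + x_t) ≥ min (x_t, 1) / 2`, and the sum telescopes.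
-/

open Matrix

theorem Real.min_le_two_mul_log_one_add {x : ℝ} (hx : 0 ≤ x) :
    min x 1 ≤ 2 * Real.log (1 + x) := by
  have hlog : x / (1 + x) ≤ Real.log (1 + x) := by
    have := Real.one_sub_inv_le_log_of_pos (by linarith : 0 < 1 + x)
    rwa [show 1 - (1 + x)⁻¹ = x / (1 + x) by field_simp; ring] at this
  have : min x 1 ≤ 2 * (x / (1 + x)) := by
    rw [mul_div_assoc', le_div_iff₀ (by positivity)]
    rcases le_total x 1 with h | h
    · rw [min_eq_left h]; nlinarith
    · rw [min_eq_right h]; nlinarith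
  linarith

theorem Finset.one_add_sum_le_prod_one_add {ι : Type*} (s : Finset ι) {f : ι → ℝ}
    (hf : ∀ i ∈ s, 0 ≤ f i) : 1 + ∑ i ∈ s, f i ≤ ∏ i ∈ s, (1 + f i) := by
  induction s using Finset.cons_induction with
  | empty => simp
  | cons a s ha ih =>
    rw [Finset.forall_mem_cons] at hf
    rw [Finset.sum_cons, Finset.prod_cons]
    have := Finset.sum_nonneg hf.2
    nlinarith [ih hf.2]

namespace Matrix

variable {n ι : Type*} [Fintype n] [Fintype ι]

theorem posSemidef_sum_vecMulVec_self (v : ι → n → ℝ) :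
    (∑ i, vecMulVec (v i) (v i)).PosSemidef :=
  posSemidef_sum _ fun i _ => by simpa using posSemidef_vecMulVec_self_star (v i)

theorem trace_mul_sum_vecMulVec_self (A : Matrix n n ℝ) (v : ι → n → ℝ) :
    (A * ∑ i, vecMulVec (v i) (v i)).trace = ∑ i, v i ⬝ᵥ (A *ᵥ v i) := by
  simp only [Matrix.mul_sum, trace_sum, mul_vecMulVec, trace_vecMulVec, dotProduct_comm]

variable [DecidableEq n]

theorem PosSemidef.one_add_trace_le_det_one_add {N : Matrix n n ℝ} (hN : N.PosSemidef) :
    1 + N.trace ≤ (1 + N).det := by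
  have hdet : (1 + N).det = ∏ i, (1 + hN.1.eigenvalues i) := by
    conv_lhs =>
      rw [hN.1.spectral_theorem, ← map_one (Unitary.conjStarAlgAut ℝ _ hN.1.eigenvectorUnitary),
        ← map_add]
    rw [Unitary.conjStarAlgAut_apply, det_mul_right_comm, ← Unitary.coe_star,
      Unitary.coe_mul_star_self, one_mul, ← diagonal_one, diagonal_add, det_diagonal]
    simp
  rw [hdet, hN.1.trace_eq_sum_eigenvalues]
  exact Finset.univ.one_add_sum_le_prod_one_add fun i _ => hN.eigenvalues_nonneg i

open scoped MatrixOrder in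
theorem PosDef.det_mul_one_add_trace_inv_mul_le_det_add {S M : Matrix n n ℝ}
    (hS : S.PosDef) (hM : M.PosSemidef) :
    S.det * (1 + (S⁻¹ * M).trace) ≤ (S + M).det := by
  set R := CFC.sqrt S
  have hRR : R * R = S := CFC.sqrt_mul_sqrt_self S hS.posSemidef.nonneg
  have hRsymm : Rᴴ = R := (CFC.sqrt_nonneg S).posSemidef.1
  have hdetR : R.det * R.det = S.det := by rw [← det_mul, hRR]
  have hR : IsUnit R.det :=
    (ne_of_apply_ne (· * R.det) (by simp [hdetR, hS.det_pos.ne'])).isUnit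
  set N := R⁻¹ * M * R⁻¹
  have hN : N.PosSemidef := by
    have := hM.mul_mul_conjTranspose_same R⁻¹
    rwa [conjTranspose_nonsing_inv, hRsymm] at this
  have hSM : S + M = R * (1 + N) * R := by
    simp only [N, mul_add, add_mul, mul_one, ← Matrix.mul_assoc, mul_nonsing_inv R hR, one_mul,
      hRR]
    rw [Matrix.mul_assoc, nonsing_inv_mul R hR, mul_one]
  have htr : N.trace = (S⁻¹ * M).trace := by
    rw [trace_mul_comm, ← Matrix.mul_assoc, ← Matrix.mul_inv_rev, hRR]
  calc S.det * (1 + (S⁻¹ * M).trace) ≤ S.det * (1 + N).det := by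
        rw [← htr]
        exact mul_le_mul_of_nonneg_left hN.one_add_trace_le_det_one_add hS.det_pos.le
    _ = (S + M).det := by rw [hSM, det_mul, det_mul, ← hdetR]; ring

theorem PosDef.min_sum_dotProduct_inv_mulVec_le_two_mul_log_det_sub {S : Matrix n n ℝ}
    (hS : S.PosDef) (v : ι → n → ℝ) :
    min (∑ i, v i ⬝ᵥ (S⁻¹ *ᵥ v i)) 1 ≤
      2 * (Real.log (S + ∑ i, vecMulVec (v i) (v i)).det - Real.log S.det) := by
  set x := ∑ i, v i ⬝ᵥ (S⁻¹ *ᵥ v i)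
  have hx : 0 ≤ x := Finset.sum_nonneg fun i _ => by
    simpa using hS.inv.posSemidef.dotProduct_mulVec_nonneg (v i)
  have hdet : S.det * (1 + x) ≤ (S + ∑ i, vecMulVec (v i) (v i)).det := by
    have := hS.det_mul_one_add_trace_inv_mul_le_det_add (posSemidef_sum_vecMulVec_self v)
    rwa [trace_mul_sum_vecMulVec_self] at this
  have hlog : Real.log S.det + Real.log (1 + x) ≤
      Real.log (S + ∑ i, vecMulVec (v i) (v i)).det := by
    rw [← Real.log_mul hS.det_pos.ne' (by positivity)]
    exact Real.log_le_log (by positivity [hS.det_pos]) hdet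
  linarith [Real.min_le_two_mul_log_one_add hx]

end Matrix

open Matrix in
theorem stmt_8_general (d T H : ℕ) (lam : ℝ) (hlam : 0 < lam)
    (φ : ℕ → Fin H → Fin d → ℝ)
    (Sig : ℕ → Matrix (Fin d) (Fin d) ℝ)
    (hS0 : Sig 0 = lam • (1 : Matrix (Fin d) (Fin d) ℝ))
    (hSrec : ∀ t, Sig (t + 1) = Sig t + ∑ h : Fin H, Matrix.vecMulVec (φ t h) (φ t h)) :
    ∑ t ∈ Finset.range T,
        min (∑ h : Fin H, φ t h ⬝ᵥ ((Sig t)⁻¹ *ᵥ φ t h)) 1 ≤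
      2 * Real.log ((Sig T).det / (Sig 0).det) := by
  have hpos : ∀ t, (Sig t).PosDef := by
    intro t
    induction t with
    | zero => rw [hS0, smul_one_eq_diagonal]; exact PosDef.diagonal fun _ => hlam
    | succ t ih => rw [hSrec t]; exact ih.add_posSemidef (posSemidef_sum_vecMulVec_self (φ t))
  calc ∑ t ∈ Finset.range T, min (∑ h : Fin H, φ t h ⬝ᵥ ((Sig t)⁻¹ *ᵥ φ t h)) 1
      ≤ ∑ t ∈ Finset.range T, 2 * (Real.log (Sig (t + 1)).det - Real.log (Sig t).det) :=
        Finset.sum_le_sum fun t _ => by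
          rw [hSrec t]; exact (hpos t).min_sum_dotProduct_inv_mulVec_le_two_mul_log_det_sub (φ t)
    _ = 2 * Real.log ((Sig T).det / (Sig 0).det) := by
        rw [← Finset.mul_sum, Finset.sum_range_sub (fun t => Real.log (Sig t).det),
          Real.log_div (hpos T).det_pos.ne' (hpos 0).det_pos.ne']

open Matrix in
theorem stmt_8 (d T H : ℕ) (hH : 0 < H) (lam : ℝ) (hlam : 0 < lam)
    (φ : ℕ → Fin H → Fin d → ℝ)
    (Sig : ℕ → Matrix (Fin d) (Fin d) ℝ)
    (hS0 : Sig 0 = lam • (1 : Matrix (Fin d) (Fin d) ℝ))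
    (hSrec : ∀ t, Sig (t + 1) = Sig t + ∑ h : Fin H, Matrix.vecMulVec (φ t h) (φ t h)) :
    ∑ t ∈ Finset.range T,
        min (∑ h : Fin H, φ t h ⬝ᵥ ((Sig t)⁻¹ *ᵥ φ t h)) 1 ≤
      2 * Real.log ((Sig T).det / (Sig 0).det) :=
  stmt_8_general d T H lam hlam φ Sig hS0 hSrec
end
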